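/- Let n = 2 ≤ N, let Ω ⊆ ℝ² be open and connected, and let u : Ω → ℝ^N be a C² immersion solving the tangential system K_P(Du(x))·∇(K∘Du)(x) = 0 on Ω. Then the rank of S(Du(x)ᵀDu(x)) is the same at every x ∈ Ω and equals either 0 or 2. If the rank is 0 everywhere, then K(Du) ≡ 2 and u is conformal: Du(x)ᵀDu(x) = (|Du(x)|²/2)·I for all x ∈ Ω. If the rank is 2 everywhere, then there is a constant c > 2 with K(Du) ≡ c on Ω. -/

import Mathlib

/-!
For a symmetric `2 × 2` matrix `B`, `tr B ^ 2 - 4 det B = -4 det S(B) = (B₀₀ - B₁₁)² + 4 B₀₁²`.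
Applied to the Gram matrix `B = DuᵀDu` this gives `K(Du) = tr B / √(det B) ≥ 2`, with equality
exactly where `S(B) = 0`, and shows that `S(B) ≠ 0` forces `det S(B) < 0`, so `S(B)` is then
invertible. Multiplying the tangential system by `Duᵀ` yields `S(DuᵀDu) ∇(K ∘ Du) = 0`. Hence
`∇(K ∘ Du)` vanishes everywhere: where `S ≠ 0` by invertibility, and where `S = 0` because `K ∘ Du`
attains its minimum value `2` there. So `K ∘ Du` is constant on the connected set `Ω`, and whether
the constant is `2` decides which alternative holds at every point.
-/

open Matrix

/-- The dilation function `K(P) = |P|² / det(PᵀP)^(1/n)`, where `|P|² = tr(PᵀP)`. -/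
noncomputable def dil {N n : ℕ} (P : Matrix (Fin N) (Fin n) ℝ) : ℝ :=
  (Pᵀ * P).trace / (Pᵀ * P).det ^ ((1 : ℝ) / n)

/-- The Ahlfors operator `S(A) = (A + Aᵀ)/2 − (tr(A)/n)·I`. -/
noncomputable def ahl {n : ℕ} (A : Matrix (Fin n) (Fin n) ℝ) : Matrix (Fin n) (Fin n) ℝ :=
  (2⁻¹ : ℝ) • (A + Aᵀ) - (A.trace / (n : ℝ)) • 1

/-- `K_P(P) = 2·P·(PᵀP)⁻¹·S(PᵀP)/det(PᵀP)^(1/n)`. -/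
noncomputable def dilGrad {N n : ℕ} (P : Matrix (Fin N) (Fin n) ℝ) : Matrix (Fin N) (Fin n) ℝ :=
  (2 / (Pᵀ * P).det ^ ((1 : ℝ) / n)) • (P * (Pᵀ * P)⁻¹ * ahl (Pᵀ * P))

/-- The Jacobian matrix `Du(x) ∈ ℝ^{N×n}` of a map `u : ℝⁿ → ℝ^N`. -/
noncomputable def jac {n N : ℕ} (u : EuclideanSpace ℝ (Fin n) → (Fin N → ℝ))
    (x : EuclideanSpace ℝ (Fin n)) : Matrix (Fin N) (Fin n) ℝ :=
  Matrix.of fun α i => fderiv ℝ u x (EuclideanSpace.single i 1) α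

/-- The gradient of a scalar function on `ℝⁿ`. -/
noncomputable def egrad {n : ℕ} (f : EuclideanSpace ℝ (Fin n) → ℝ)
    (x : EuclideanSpace ℝ (Fin n)) : Fin n → ℝ :=
  fun i => fderiv ℝ f x (EuclideanSpace.single i 1)

open Topology

theorem ahl_eq_sub_of_isSymm {n : ℕ} {A : Matrix (Fin n) (Fin n) ℝ} (hA : A.IsSymm) :
    ahl A = A - (A.trace / n) • 1 := by
  rw [ahl, hA.eq, ← two_smul ℝ A, smul_smul, inv_mul_cancel₀ two_ne_zero, one_smul]

theorem eq_smul_one_of_ahl_eq_zero {n : ℕ} {A : Matrix (Fin n) (Fin n) ℝ} (hA : A.IsSymm)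
    (h : ahl A = 0) : A = (A.trace / n) • 1 := by
  rwa [ahl_eq_sub_of_isSymm hA, sub_eq_zero] at h

section TwoByTwo

variable {B : Matrix (Fin 2) (Fin 2) ℝ}

theorem det_ahl_of_isSymm (hB : B.IsSymm) :
    (ahl B).det = -((B 0 0 - B 1 1) ^ 2 / 4 + B 0 1 ^ 2) := by
  rw [ahl_eq_sub_of_isSymm hB, det_fin_two]
  simp only [Matrix.sub_apply, Matrix.smul_apply, one_apply_eq, one_apply_ne zero_ne_one,
    one_apply_ne one_ne_zero, smul_eq_mul, trace_fin_two, hB.apply 0 1, Nat.cast_ofNat]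
  ring

theorem ahl_eq_zero_iff_det_eq_zero (hB : B.IsSymm) : ahl B = 0 ↔ (ahl B).det = 0 := by
  refine ⟨fun h => by simp [h], fun h => ?_⟩
  rw [det_ahl_of_isSymm hB] at h
  have hd : B 0 0 = B 1 1 := by nlinarith [sq_nonneg (B 0 0 - B 1 1), sq_nonneg (B 0 1)]
  have ho : B 0 1 = 0 := by nlinarith [sq_nonneg (B 0 0 - B 1 1), sq_nonneg (B 0 1)]
  rw [ahl_eq_sub_of_isSymm hB]
  ext i j
  fin_cases i <;> fin_cases j <;> simp [trace_fin_two, hd, ho, hB.apply 0 1]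

theorem trace_sq_sub_four_mul_det (hB : B.IsSymm) :
    B.trace ^ 2 - 4 * B.det = -4 * (ahl B).det := by
  rw [det_ahl_of_isSymm hB, trace_fin_two, det_fin_two, hB.apply 0 1]
  ring

theorem det_ahl_nonpos (hB : B.IsSymm) : (ahl B).det ≤ 0 := by
  rw [det_ahl_of_isSymm hB]
  nlinarith [sq_nonneg (B 0 0 - B 1 1), sq_nonneg (B 0 1)]

theorem det_ahl_ne_zero (hB : B.IsSymm) (hS : ahl B ≠ 0) : (ahl B).det ≠ 0 :=
  mt (ahl_eq_zero_iff_det_eq_zero hB).2 hS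

theorem rank_ahl_of_ne_zero (hB : B.IsSymm) (hS : ahl B ≠ 0) : (ahl B).rank = 2 := by
  simpa using rank_of_isUnit _ ((isUnit_iff_isUnit_det _).2 (det_ahl_ne_zero hB hS).isUnit)

theorem two_le_trace_div_sqrt_det (hB : B.IsSymm) (htr : 0 ≤ B.trace) (hdet : 0 < B.det) :
    2 ≤ B.trace / √B.det := by
  rw [le_div_iff₀ (Real.sqrt_pos.2 hdet), ← pow_le_pow_iff_left₀ (by positivity) htr two_ne_zero,
    mul_pow, Real.sq_sqrt hdet.le]
  linarith [trace_sq_sub_four_mul_det hB, det_ahl_nonpos hB]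

theorem trace_div_sqrt_det_eq_two_iff (hB : B.IsSymm) (htr : 0 ≤ B.trace) (hdet : 0 < B.det) :
    B.trace / √B.det = 2 ↔ ahl B = 0 := by
  rw [div_eq_iff (Real.sqrt_pos.2 hdet).ne', ← sq_eq_sq₀ htr (by positivity), mul_pow,
    Real.sq_sqrt hdet.le, ahl_eq_zero_iff_det_eq_zero hB]
  constructor <;> intro h <;> linarith [trace_sq_sub_four_mul_det hB]

end TwoByTwo

section Gram

theorem isSymm_gram {N n : ℕ} (P : Matrix (Fin N) (Fin n) ℝ) : (Pᵀ * P).IsSymm := by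
  simp [IsSymm, transpose_mul]

theorem trace_gram_nonneg {N n : ℕ} (P : Matrix (Fin N) (Fin n) ℝ) : 0 ≤ (Pᵀ * P).trace := by
  simpa using (posSemidef_conjTranspose_mul_self P).trace_nonneg

variable {N : ℕ}

theorem dil_fin_two (P : Matrix (Fin N) (Fin 2) ℝ) : dil P = (Pᵀ * P).trace / √(Pᵀ * P).det := by
  rw [dil, Real.sqrt_eq_rpow]
  norm_num

variable {P : Matrix (Fin N) (Fin 2) ℝ}

theorem two_le_dil (hP : 0 < (Pᵀ * P).det) : 2 ≤ dil P := by
  rw [dil_fin_two]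
  exact two_le_trace_div_sqrt_det (isSymm_gram P) (trace_gram_nonneg P) hP

theorem dil_eq_two_iff (hP : 0 < (Pᵀ * P).det) : dil P = 2 ↔ ahl (Pᵀ * P) = 0 := by
  rw [dil_fin_two]
  exact trace_div_sqrt_det_eq_two_iff (isSymm_gram P) (trace_gram_nonneg P) hP

end Gram

theorem ahl_mulVec_eq_zero_of_dilGrad_mulVec_eq_zero {N n : ℕ} {P : Matrix (Fin N) (Fin n) ℝ}
    (hP : 0 < (Pᵀ * P).det) {v : Fin n → ℝ} (h : dilGrad P *ᵥ v = 0) :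
    ahl (Pᵀ * P) *ᵥ v = 0 := by
  have hc : 2 / (Pᵀ * P).det ^ ((1 : ℝ) / n) ≠ 0 := by positivity
  have hPt : Pᵀ * dilGrad P = (2 / (Pᵀ * P).det ^ ((1 : ℝ) / n)) • ahl (Pᵀ * P) := by
    rw [dilGrad, Matrix.mul_smul, ← Matrix.mul_assoc, ← Matrix.mul_assoc,
      mul_nonsing_inv _ hP.ne'.isUnit, Matrix.one_mul]
  have := congrArg (Pᵀ *ᵥ ·) h
  simp only [mulVec_mulVec, hPt, smul_mulVec, mulVec_zero] at this
  exact (smul_eq_zero.1 this).resolve_left hc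

theorem fderiv_eq_zero_of_egrad_eq_zero {n : ℕ} {f : EuclideanSpace ℝ (Fin n) → ℝ}
    {x : EuclideanSpace ℝ (Fin n)} (h : egrad f x = 0) : fderiv ℝ f x = 0 := by
  refine ContinuousLinearMap.coe_injective
    ((EuclideanSpace.basisFun (Fin n) ℝ).toBasis.ext fun i => ?_)
  simpa [egrad] using congrFun h i

section EntrywiseDifferentiable

variable {𝕜 E : Type*} [NontriviallyNormedField 𝕜] [NormedAddCommGroup E] [NormedSpace 𝕜 E]
  {x : E} {m n p : Type*} [Fintype n]

theorem DifferentiableAt.matrix_mul_apply {M : E → Matrix m n 𝕜} {M' : E → Matrix n p 𝕜}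
    (hM : ∀ i j, DifferentiableAt 𝕜 (fun y => M y i j) x)
    (hM' : ∀ i j, DifferentiableAt 𝕜 (fun y => M' y i j) x) (i : m) (k : p) :
    DifferentiableAt 𝕜 (fun y => (M y * M' y) i k) x := by
  simp only [mul_apply]
  fun_prop

theorem DifferentiableAt.matrix_trace {M : E → Matrix n n 𝕜}
    (hM : ∀ i j, DifferentiableAt 𝕜 (fun y => M y i j) x) :
    DifferentiableAt 𝕜 (fun y => (M y).trace) x := by
  simp only [trace, diag]
  fun_prop

theorem DifferentiableAt.matrix_det [DecidableEq n] {M : E → Matrix n n 𝕜}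
    (hM : ∀ i j, DifferentiableAt 𝕜 (fun y => M y i j) x) :
    DifferentiableAt 𝕜 (fun y => (M y).det) x := by
  simp only [det_apply']
  fun_prop

end EntrywiseDifferentiable

section Jacobian

variable {n N : ℕ} {u : EuclideanSpace ℝ (Fin n) → (Fin N → ℝ)} {x : EuclideanSpace ℝ (Fin n)}

theorem differentiableAt_jac_apply (hu : ContDiffAt ℝ 2 u x) (α : Fin N) (i : Fin n) :
    DifferentiableAt ℝ (fun y => jac u y α i) x := by
  have hDu : DifferentiableAt ℝ (fderiv ℝ u) x :=
    (hu.fderiv_right (m := 1) (by norm_num)).differentiableAt one_ne_zero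
  exact differentiableAt_pi.1 (hDu.clm_apply (differentiableAt_const _)) α

theorem differentiableAt_dil_jac (hu : ContDiffAt ℝ 2 u x)
    (hx : 0 < ((jac u x)ᵀ * jac u x).det) :
    DifferentiableAt ℝ (fun y => dil (jac u y)) x := by
  have hgram := DifferentiableAt.matrix_mul_apply (M := fun y => (jac u y)ᵀ)
    (fun i α => differentiableAt_jac_apply hu α i) (differentiableAt_jac_apply hu)
  simp only [dil, div_eq_mul_inv]
  exact (DifferentiableAt.matrix_trace hgram).mul
    (((DifferentiableAt.matrix_det hgram).rpow_const (Or.inl hx.ne')).inv (by positivity))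

end Jacobian

theorem fderiv_dil_jac_eq_zero {N : ℕ} {u : EuclideanSpace ℝ (Fin 2) → (Fin N → ℝ)}
    {x : EuclideanSpace ℝ (Fin 2)} (himm : ∀ᶠ y in 𝓝 x, 0 < ((jac u y)ᵀ * jac u y).det)
    (htang : dilGrad (jac u x) *ᵥ egrad (fun y => dil (jac u y)) x = 0) :
    fderiv ℝ (fun y => dil (jac u y)) x = 0 := by
  have hx := himm.self_of_nhds
  by_cases hS : ahl ((jac u x)ᵀ * jac u x) = 0
  · have hmin : IsLocalMin (fun y => dil (jac u y)) x := by
      filter_upwards [himm] with y hy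
      rw [(dil_eq_two_iff hx).2 hS]
      exact two_le_dil hy
    exact hmin.fderiv_eq_zero
  · exact fderiv_eq_zero_of_egrad_eq_zero <| eq_zero_of_mulVec_eq_zero
      (det_ahl_ne_zero (isSymm_gram _) hS) (ahl_mulVec_eq_zero_of_dilGrad_mulVec_eq_zero hx htang)

theorem two_dim_rank_dichotomy_general (N : ℕ)
    (Ω : Set (EuclideanSpace ℝ (Fin 2))) (hΩ : IsOpen Ω) (hconn : IsConnected Ω)
    (u : EuclideanSpace ℝ (Fin 2) → (Fin N → ℝ))
    (hu : ContDiffOn ℝ 2 u Ω)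
    (himm : ∀ x ∈ Ω, 0 < ((jac u x)ᵀ * jac u x).det)
    (htang : ∀ x ∈ Ω, (dilGrad (jac u x)).mulVec (egrad (fun y => dil (jac u y)) x) = 0) :
    ∃ r : ℕ, (r = 0 ∨ r = 2) ∧ (∀ x ∈ Ω, (ahl ((jac u x)ᵀ * jac u x)).rank = r) ∧
      (r = 0 → ∀ x ∈ Ω, dil (jac u x) = 2 ∧
        (jac u x)ᵀ * jac u x
          = ((((jac u x)ᵀ * jac u x).trace) / 2) • (1 : Matrix (Fin 2) (Fin 2) ℝ)) ∧
      (r = 2 → ∃ c : ℝ, 2 < c ∧ ∀ x ∈ Ω, dil (jac u x) = c) := by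
  have hK : Ω.EqOn (fderiv ℝ fun y => dil (jac u y)) 0 := fun x hx =>
    fderiv_dil_jac_eq_zero (Filter.eventually_of_mem (hΩ.mem_nhds hx) himm) (htang x hx)
  obtain ⟨c, hc⟩ := hΩ.exists_is_const_of_fderiv_eq_zero hconn.isPreconnected (fun x hx =>
    (differentiableAt_dil_jac (hu.contDiffAt (hΩ.mem_nhds hx)) (himm x hx)).differentiableWithinAt)
    hK
  obtain ⟨x₀, hx₀⟩ := hconn.nonempty
  have hc2 : 2 ≤ c := hc x₀ hx₀ ▸ two_le_dil (himm x₀ hx₀)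
  have hS : ∀ x ∈ Ω, ahl ((jac u x)ᵀ * jac u x) = 0 ↔ c = 2 := fun x hx => by
    rw [← dil_eq_two_iff (himm x hx), hc x hx]
  rcases hc2.eq_or_lt with rfl | hc2
  · refine ⟨0, Or.inl rfl, fun x hx => ?_, fun _ x hx => ⟨hc x hx, ?_⟩, by simp⟩
    · rw [(hS x hx).2 rfl, rank_zero]
    · simpa using eq_smul_one_of_ahl_eq_zero (isSymm_gram _) ((hS x hx).2 rfl)
  · exact ⟨2, Or.inr rfl, fun x hx => rank_ahl_of_ne_zero (isSymm_gram _) (mt (hS x hx).1 hc2.ne'),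
      by simp, fun _ => ⟨c, hc2, hc⟩⟩

/-- for `n = 2 ≤ N`, a `C²` immersion on connected open `Ω ⊆ ℝ²` solving the
tangential system has `rank S(DuᵀDu)` constant on `Ω`, equal to `0` or `2`; if the rank is
`0` then `K(Du) ≡ 2` and `u` is conformal, and if the rank is `2` then `K(Du) ≡ c` for
some constant `c > 2`. -/
theorem two_dim_rank_dichotomy (N : ℕ) (hN : 2 ≤ N)
    (Ω : Set (EuclideanSpace ℝ (Fin 2))) (hΩ : IsOpen Ω) (hconn : IsConnected Ω)
    (u : EuclideanSpace ℝ (Fin 2) → (Fin N → ℝ))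
    (hu : ContDiffOn ℝ 2 u Ω)
    (himm : ∀ x ∈ Ω, 0 < ((jac u x)ᵀ * jac u x).det)
    (htang : ∀ x ∈ Ω, (dilGrad (jac u x)).mulVec (egrad (fun y => dil (jac u y)) x) = 0) :
    ∃ r : ℕ, (r = 0 ∨ r = 2) ∧ (∀ x ∈ Ω, (ahl ((jac u x)ᵀ * jac u x)).rank = r) ∧
      (r = 0 → ∀ x ∈ Ω, dil (jac u x) = 2 ∧
        (jac u x)ᵀ * jac u x
          = ((((jac u x)ᵀ * jac u x).trace) / 2) • (1 : Matrix (Fin 2) (Fin 2) ℝ)) ∧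
      (r = 2 → ∃ c : ℝ, 2 < c ∧ ∀ x ∈ Ω, dil (jac u x) = c) :=
  two_dim_rank_dichotomy_general N Ω hΩ hconn u hu himm htang
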